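/- arXiv:1607.03322 — 3 statements merged into one kernel-verified Lean document; each statement's English description precedes it below -/
import Mathlib

section
/- Let R be a (not necessarily commutative) ring and let t ∈ R be a central non-zero-divisor. Suppose β : R × R → R is a map satisfying t·β(a,b) = ab − ba for all a, b ∈ R. Then β satisfies the Jacobi identity: β(a, β(b,c)) + β(b, β(c,a)) + β(c, β(a,b)) = 0 for all a, b, c ∈ R. -/
/-- If `t` is a central non-zero-divisor of a ring `R` and
`β : R × R → R` satisfies `t * β a b = a * b - b * a`, then `β` satisfies the
Jacobi identity. -/
theorem beta_jacobi (R : Type*) [Ring R] (t : R)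
    (hcentral : ∀ a : R, t * a = a * t)
    (hreg : ∀ b : R, t * b = 0 → b = 0)
    (β : R → R → R)
    (hβ : ∀ a b : R, t * β a b = a * b - b * a) :
    ∀ a b c : R, β a (β b c) + β b (β c a) + β c (β a b) = 0 := by
  intro a b c
  apply hreg
  apply hreg
  have key : ∀ x y z : R, t * (t * β x (β y z)) = x * (y*z - z*y) - (y*z - z*y) * x := by
    intro x y z
    calc t * (t * β x (β y z)) = t * (x * β y z - β y z * x) := by rw [hβ]
    _ = x * (t * β y z) - (t * β y z) * x := by
        rw [mul_sub]
        rw [show t * (x * β y z) = x * (t * β y z) by rw [← mul_assoc, hcentral x, mul_assoc],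
            show t * (β y z * x) = (t * β y z) * x by rw [mul_assoc]]
    _ = x * (y*z - z*y) - (y*z - z*y) * x := by rw [hβ]
  rw [mul_add, mul_add, mul_add, mul_add, key, key, key]
  noncomm_ring
end

section
/- The central element t − 1 of B is a non-zero-divisor: for every b ∈ B, if (t−1)·b = 0 then b = 0. -/
open LaurentPolynomial FreeAlgebra

noncomputable section

/-- Generators `e`, `f`, `h`. -/
inductive Bgen | e | f | h

variable (k : Type*) [Field k] [CharZero k]

/-- The free algebra over the Laurent polynomial ring `k[t,t⁻¹]` on `e, f, h`. -/
abbrev FB := FreeAlgebra (LaurentPolynomial k) Bgen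

/-- The defining relations of `B`:
`ef − fe = (t−1)h`, `he − eh = 2(t−1)e`, `hf − fh = −2(t−1)f`. -/
inductive Brel : FB k → FB k → Prop
  | ef : Brel (ι _ .e * ι _ .f - ι _ .f * ι _ .e)
      (algebraMap (LaurentPolynomial k) (FB k) (T 1 - 1) * ι _ .h)
  | he : Brel (ι _ .h * ι _ .e - ι _ .e * ι _ .h)
      (algebraMap (LaurentPolynomial k) (FB k) (2 * (T 1 - 1)) * ι _ .e)
  | hf : Brel (ι _ .h * ι _ .f - ι _ .f * ι _ .h)
      (-(algebraMap (LaurentPolynomial k) (FB k) (2 * (T 1 - 1))) * ι _ .f)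

/-- `B`, the `k[t,t⁻¹]`-algebra generated by `e, f, h` subject to the relations
`ef − fe = (t−1)h`, `he − eh = 2(t−1)e`, `hf − fh = −2(t−1)f` (the quotient of the
free algebra by the two-sided ideal generated by the relations). -/
abbrev B := RingQuot (Brel k)

/-- The generator `e` of `B`. -/
def Be : B k := RingQuot.mkAlgHom (LaurentPolynomial k) _ (ι _ .e)
/-- The generator `f` of `B`. -/
def Bf : B k := RingQuot.mkAlgHom (LaurentPolynomial k) _ (ι _ .f)
/-- The generator `h` of `B`. -/
def Bh : B k := RingQuot.mkAlgHom (LaurentPolynomial k) _ (ι _ .h)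
/-- The image of `t` in `B`. -/
def Bt : B k := algebraMap (LaurentPolynomial k) (B k) (T 1)

/-!
Left multiplication in `B`, written in the PBW monomials `f^a h^b e^n ↦ x₀^a x₁^b x₂^n`, is given
by differential operators on `R[x₀, x₁, x₂]` with `R = k[t, t⁻¹]` and `c = t - 1`:
`f = x₀`, `h = x₁ - 2c x₀ ∂₀` and `e = x₂ σ + c x₁ ∂₀ - c² x₀ ∂₀²`, where `σ` substitutes
`x₁ - 2c` for `x₁`. These satisfy the defining relations for every `c`, so they give a
representation `ρ` of `B` with `ρ (f^a h^b e^n) 1 = x₀^a x₁^b x₂^n`. Since the PBW monomials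
span `B`, the map `b ↦ ρ b 1` has a left inverse, so `B` embeds `k[t, t⁻¹]`-linearly into a
polynomial ring over a domain, where `t - 1` is not a zero divisor.
-/

open MvPolynomial

section Operators

variable {R : Type*} [CommRing R] (c : R)

def shiftX₁ : MvPolynomial (Fin 3) R →ₐ[R] MvPolynomial (Fin 3) R :=
  aeval ![X 0, X 1 - MvPolynomial.C (2 * c), X 2]

def opF : Module.End R (MvPolynomial (Fin 3) R) := LinearMap.mulLeft R (X 0)

def opH : Module.End R (MvPolynomial (Fin 3) R) :=
  LinearMap.mulLeft R (X 1) - (2 * c) • (LinearMap.mulLeft R (X 0) ∘ₗ (pderiv 0).toLinearMap)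

def opE : Module.End R (MvPolynomial (Fin 3) R) :=
  LinearMap.mulLeft R (X 2) ∘ₗ (shiftX₁ c).toLinearMap
    + c • (LinearMap.mulLeft R (X 1) ∘ₗ (pderiv 0).toLinearMap)
    - (c * c) • (LinearMap.mulLeft R (X 0) ∘ₗ (pderiv 0).toLinearMap ∘ₗ (pderiv 0).toLinearMap)

variable {c}

lemma opF_apply (p : MvPolynomial (Fin 3) R) : opF p = X 0 * p := rfl

lemma opH_apply (p : MvPolynomial (Fin 3) R) :
    opH c p = X 1 * p - (2 * c) • (X 0 * pderiv 0 p) := rfl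

lemma opE_apply (p : MvPolynomial (Fin 3) R) :
    opE c p = X 2 * shiftX₁ c p + c • (X 1 * pderiv 0 p)
      - (c * c) • (X 0 * pderiv 0 (pderiv 0 p)) :=
  rfl

@[simp] lemma shiftX₁_X_zero : shiftX₁ c (X 0) = X 0 := by simp [shiftX₁]
@[simp] lemma shiftX₁_X_one : shiftX₁ c (X 1) = X 1 - MvPolynomial.C (2 * c) := by simp [shiftX₁]
@[simp] lemma shiftX₁_X_two : shiftX₁ c (X 2) = X 2 := by simp [shiftX₁]

lemma pderiv_zero_shiftX₁ (p : MvPolynomial (Fin 3) R) :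
    pderiv 0 (shiftX₁ c p) = shiftX₁ c (pderiv 0 p) := by
  induction p using MvPolynomial.induction_on with
  | C r => simp
  | add p q hp hq => simp [hp, hq]
  | mul_X p i hp => fin_cases i <;> simp [Derivation.leibniz, hp, pderiv_X]

lemma opE_mul_opF_sub : opE c * opF - opF * opE c = c • opH c := by
  refine LinearMap.ext fun p => ?_
  simp [opE_apply, opF_apply, opH_apply, shiftX₁, Derivation.leibniz, pderiv_X]
  simp only [MvPolynomial.smul_eq_C_mul, map_mul, map_ofNat]
  ring

lemma opH_mul_opE_sub : opH c * opE c - opE c * opH c = (2 * c) • opE c := by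
  refine LinearMap.ext fun p => ?_
  simp [opE_apply, opH_apply, Derivation.leibniz, pderiv_zero_shiftX₁, pderiv_X]
  simp only [MvPolynomial.smul_eq_C_mul, map_mul, map_ofNat]
  ring

lemma opH_mul_opF_sub : opH c * opF - opF * opH c = -(2 * c) • opF := by
  refine LinearMap.ext fun p => ?_
  simp [opF_apply, opH_apply, Derivation.leibniz, pderiv_X]
  simp only [MvPolynomial.smul_eq_C_mul, map_mul, map_ofNat]
  ring

lemma pderiv_zero_X_one_pow_mul_X_two_pow (b n : ℕ) :
    pderiv 0 (X 1 ^ b * X 2 ^ n : MvPolynomial (Fin 3) R) = 0 := by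
  simp [Derivation.leibniz, Derivation.leibniz_pow, pderiv_X]

lemma opF_pow_apply (a : ℕ) (p : MvPolynomial (Fin 3) R) : (opF ^ a) p = X 0 ^ a * p := by
  induction a with
  | zero => simp
  | succ a ih => rw [pow_succ', Module.End.mul_apply, ih, opF_apply, pow_succ', mul_assoc]

lemma opH_pow_apply_X_two_pow (b n : ℕ) :
    (opH c ^ b) (X 2 ^ n) = X 1 ^ b * X 2 ^ n := by
  induction b with
  | zero => simp
  | succ b ih =>
    rw [pow_succ', Module.End.mul_apply, ih, opH_apply, pderiv_zero_X_one_pow_mul_X_two_pow,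
      mul_zero, smul_zero, sub_zero, pow_succ', mul_assoc]

lemma opE_pow_apply_one (n : ℕ) : (opE c ^ n) (1 : MvPolynomial (Fin 3) R) = X 2 ^ n := by
  induction n with
  | zero => simp
  | succ n ih => simp [pow_succ', ih, opE_apply, Derivation.leibniz_pow, pderiv_X]

end Operators

lemma LaurentPolynomial.T_one_sub_one_ne_zero (R : Type*) [CommRing R] [Nontrivial R] :
    (T 1 - 1 : R[T;T⁻¹]) ≠ 0 := by
  rw [← Polynomial.toLaurent_X, ← map_one Polynomial.toLaurent, ← map_sub]
  exact Polynomial.toLaurent_ne_zero.mpr (Polynomial.X_sub_C_ne_zero 1)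

section Algebra

variable (k : Type*) [Field k]

def genOp : Bgen → Module.End k[T;T⁻¹] (MvPolynomial (Fin 3) k[T;T⁻¹])
  | .e => opE (T 1 - 1)
  | .f => opF
  | .h => opH (T 1 - 1)

lemma lift_genOp_rel ⦃x y : FB k⦄ (h : Brel k x y) :
    FreeAlgebra.lift _ (genOp k) x = FreeAlgebra.lift _ (genOp k) y := by
  cases h <;>
    simp only [map_sub, map_mul, map_neg, map_one, map_ofNat, FreeAlgebra.lift_ι_apply,
      AlgHom.commutes, genOp, opE_mul_opF_sub, opH_mul_opE_sub, opH_mul_opF_sub,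
      Algebra.smul_def]

def rho : B k →ₐ[k[T;T⁻¹]] Module.End k[T;T⁻¹] (MvPolynomial (Fin 3) k[T;T⁻¹]) :=
  RingQuot.liftAlgHom _ ⟨FreeAlgebra.lift _ (genOp k), lift_genOp_rel k⟩

@[simp] lemma rho_Be : rho k (Be k) = opE (T 1 - 1) := by
  rw [Be, rho, RingQuot.liftAlgHom_mkAlgHom_apply, FreeAlgebra.lift_ι_apply]; rfl

@[simp] lemma rho_Bf : rho k (Bf k) = opF := by
  rw [Bf, rho, RingQuot.liftAlgHom_mkAlgHom_apply, FreeAlgebra.lift_ι_apply]; rfl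

@[simp] lemma rho_Bh : rho k (Bh k) = opH (T 1 - 1) := by
  rw [Bh, rho, RingQuot.liftAlgHom_mkAlgHom_apply, FreeAlgebra.lift_ι_apply]; rfl

def pbwMonomial (a b n : ℕ) : B k := Bf k ^ a * (Bh k ^ b * Be k ^ n)

lemma rho_pbwMonomial_apply_one (a b n : ℕ) :
    rho k (pbwMonomial k a b n) 1 = X 0 ^ a * (X 1 ^ b * X 2 ^ n) := by
  simp only [pbwMonomial, map_mul, map_pow, rho_Be, rho_Bf, rho_Bh, Module.End.mul_apply,
    opE_pow_apply_one, opH_pow_apply_X_two_pow, opF_pow_apply]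

lemma Be_mul_Bf : Be k * Bf k = Bf k * Be k + (T 1 - 1 : k[T;T⁻¹]) • Bh k := by
  have h := RingQuot.mkAlgHom_rel k[T;T⁻¹] (Brel.ef (k := k))
  rw [map_sub, map_mul, map_mul, map_mul, AlgHom.commutes, ← Algebra.smul_def] at h
  rw [Be, Bf, Bh, ← h, add_sub_cancel]

-- `neg_mul`, `sub_mul` and `neg_smul` without explicit arguments do not fire in `B k`, whose
-- `RingQuot` instances are not reducibly the ring ones; hence the signs live in the scalars.
lemma Bh_mul_Bf : Bh k * Bf k = Bf k * Bh k + (-(2 * (T 1 - 1)) : k[T;T⁻¹]) • Bf k := by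
  have h := RingQuot.mkAlgHom_rel k[T;T⁻¹] (Brel.hf (k := k))
  rw [← map_neg, map_sub, map_mul, map_mul, map_mul, AlgHom.commutes, ← Algebra.smul_def] at h
  rw [Bh, Bf, ← h, add_sub_cancel]

lemma Be_mul_Bh : Be k * Bh k = Bh k * Be k + (-(2 * (T 1 - 1)) : k[T;T⁻¹]) • Be k := by
  have h := RingQuot.mkAlgHom_rel k[T;T⁻¹] (Brel.he (k := k))
  rw [map_sub, map_mul, map_mul, map_mul, AlgHom.commutes, ← Algebra.smul_def] at h
  rw [neg_smul (2 * (T 1 - 1) : k[T;T⁻¹]) (Be k), Be, Bh, ← h, neg_sub, add_sub_cancel]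

lemma Bh_mul_Bf_pow (a : ℕ) :
    Bh k * Bf k ^ a = Bf k ^ a * Bh k + (-(2 * (a : k[T;T⁻¹]) * (T 1 - 1))) • Bf k ^ a := by
  induction a with
  | zero => simp
  | succ a ih =>
    rw [pow_succ', ← mul_assoc, Bh_mul_Bf, add_mul, smul_mul_assoc, mul_assoc, ih, mul_add,
      mul_smul_comm, ← mul_assoc, ← pow_succ', add_assoc, ← add_smul]
    congr 2
    push_cast
    ring

def pbwSpan : Submodule k[T;T⁻¹] (B k) :=
  Submodule.span _ (Set.range fun d : ℕ × ℕ × ℕ => pbwMonomial k d.1 d.2.1 d.2.2)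

lemma pbwMonomial_mem_pbwSpan (a b n : ℕ) : pbwMonomial k a b n ∈ pbwSpan k :=
  Submodule.subset_span ⟨(a, b, n), rfl⟩

lemma mul_mem_pbwSpan {x y : B k} (hx : ∀ a b n, x * pbwMonomial k a b n ∈ pbwSpan k)
    (hy : y ∈ pbwSpan k) : x * y ∈ pbwSpan k := by
  refine Submodule.span_le (p := (pbwSpan k).comap (LinearMap.mulLeft k[T;T⁻¹] x)) |>.mpr ?_ hy
  rintro _ ⟨⟨a, b, n⟩, rfl⟩
  exact hx a b n

lemma Bf_mul_mem_pbwSpan {y : B k} (hy : y ∈ pbwSpan k) : Bf k * y ∈ pbwSpan k := by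
  refine mul_mem_pbwSpan k (fun a b n => ?_) hy
  rw [pbwMonomial, ← mul_assoc, ← pow_succ']
  exact pbwMonomial_mem_pbwSpan k (a + 1) b n

lemma Bh_mul_mem_pbwSpan {y : B k} (hy : y ∈ pbwSpan k) : Bh k * y ∈ pbwSpan k := by
  refine mul_mem_pbwSpan k (fun a b n => ?_) hy
  rw [pbwMonomial, ← mul_assoc, Bh_mul_Bf_pow, add_mul, smul_mul_assoc, mul_assoc,
    ← mul_assoc (Bh k), ← pow_succ']
  exact add_mem (pbwMonomial_mem_pbwSpan k a (b + 1) n)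
    (Submodule.smul_mem _ _ (pbwMonomial_mem_pbwSpan k a b n))

lemma Be_mul_Bh_pow_mul_Be_pow_mem_pbwSpan (b n : ℕ) :
    Be k * (Bh k ^ b * Be k ^ n) ∈ pbwSpan k := by
  induction b with
  | zero => simpa [pbwMonomial, pow_succ'] using pbwMonomial_mem_pbwSpan k 0 0 (n + 1)
  | succ b ih =>
    rw [pow_succ', mul_assoc, ← mul_assoc (Be k), Be_mul_Bh, add_mul, smul_mul_assoc, mul_assoc]
    exact add_mem (Bh_mul_mem_pbwSpan k ih) (Submodule.smul_mem _ _ ih)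

lemma Be_mul_mem_pbwSpan {y : B k} (hy : y ∈ pbwSpan k) : Be k * y ∈ pbwSpan k := by
  refine mul_mem_pbwSpan k (fun a b n => ?_) hy
  induction a with
  | zero => rw [pbwMonomial, pow_zero, one_mul]; exact Be_mul_Bh_pow_mul_Be_pow_mem_pbwSpan k b n
  | succ a ih =>
    rw [pbwMonomial, pow_succ', mul_assoc, ← mul_assoc (Be k), Be_mul_Bf, add_mul,
      smul_mul_assoc, mul_assoc]
    exact add_mem (Bf_mul_mem_pbwSpan k ih)
      (Submodule.smul_mem _ _ (Bh_mul_mem_pbwSpan k (pbwMonomial_mem_pbwSpan k a b n)))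

lemma pbwSpan_eq_top : pbwSpan k = ⊤ := by
  rw [eq_top_iff]
  rintro x -
  obtain ⟨x, rfl⟩ := RingQuot.mkAlgHom_surjective k[T;T⁻¹] (Brel k) x
  suffices ∀ y ∈ pbwSpan k, RingQuot.mkAlgHom k[T;T⁻¹] (Brel k) x * y ∈ pbwSpan k by
    simpa using this 1 (by simpa [pbwMonomial] using pbwMonomial_mem_pbwSpan k 0 0 0)
  induction x using FreeAlgebra.induction with
  | grade0 r =>
    intro y hy
    rw [AlgHom.commutes, ← Algebra.smul_def]
    exact Submodule.smul_mem _ _ hy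
  | grade1 g =>
    cases g
    · exact fun _ => Be_mul_mem_pbwSpan k
    · exact fun _ => Bf_mul_mem_pbwSpan k
    · exact fun _ => Bh_mul_mem_pbwSpan k
  | mul x y hx hy => intro z hz; rw [map_mul, mul_assoc]; exact hx _ (hy _ hz)
  | add x y hx hy => intro z hz; rw [map_add, add_mul]; exact add_mem (hx _ hz) (hy _ hz)

def toMvPolynomial : B k →ₗ[k[T;T⁻¹]] MvPolynomial (Fin 3) k[T;T⁻¹] :=
  LinearMap.applyₗ 1 ∘ₗ (rho k).toLinearMap

def ofMvPolynomial : MvPolynomial (Fin 3) k[T;T⁻¹] →ₗ[k[T;T⁻¹]] B k :=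
  (basisMonomials (Fin 3) k[T;T⁻¹]).constr ℕ fun d => pbwMonomial k (d 0) (d 1) (d 2)

lemma ofMvPolynomial_X_pow_mul (a b n : ℕ) :
    ofMvPolynomial k (X 0 ^ a * (X 1 ^ b * X 2 ^ n)) = pbwMonomial k a b n := by
  have h : (X 0 ^ a * (X 1 ^ b * X 2 ^ n) : MvPolynomial (Fin 3) k[T;T⁻¹]) =
      basisMonomials _ _ (Finsupp.single 0 a + (Finsupp.single 1 b + Finsupp.single 2 n)) := by
    simp [X_pow_eq_monomial, monomial_mul]
  rw [h, ofMvPolynomial, Module.Basis.constr_basis]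
  simp

lemma ofMvPolynomial_toMvPolynomial (x : B k) : ofMvPolynomial k (toMvPolynomial k x) = x := by
  refine LinearMap.congr_fun (f := ofMvPolynomial k ∘ₗ toMvPolynomial k) (g := LinearMap.id)
    (LinearMap.ext_on_range (pbwSpan_eq_top k) fun ⟨a, b, n⟩ => ?_) x
  simp [toMvPolynomial, rho_pbwMonomial_apply_one, ofMvPolynomial_X_pow_mul]

lemma toMvPolynomial_injective : Function.Injective (toMvPolynomial k) :=
  Function.LeftInverse.injective (ofMvPolynomial_toMvPolynomial k)

instance : Module.IsTorsionFree k[T;T⁻¹] (B k) :=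
  (toMvPolynomial_injective k).moduleIsTorsionFree _ (map_smul _)

end Algebra

/-- the central element `t − 1` of `B` is a non-zero-divisor. -/
theorem t_sub_one_nonZeroDivisor :
    ∀ b : B k, (Bt k - 1) * b = 0 → b = 0 := by
  intro b hb
  have ht : Bt k - 1 = algebraMap k[T;T⁻¹] (B k) (T 1 - 1) := by rw [map_sub, map_one, Bt]
  rw [ht, ← Algebra.smul_def] at hb
  exact (smul_eq_zero_iff_right (T_one_sub_one_ne_zero k)).mp hb
end
end

section
/- For every λ ∈ k with λ ≠ 0, the element t − λ is a nonunit in B; equivalently, the quotient ring B/(t−λ)B is nontrivial. Moreover, t itself is a unit in B, so B/tB is the zero ring. -/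
open LaurentPolynomial FreeAlgebra

noncomputable section

variable (k : Type*) [Field k] [CharZero k]

/-! Sending `e, f, h` to `0` respects the defining relations, each side of which is a multiple
of a generator, so it gives a `k[t,t⁻¹]`-algebra map `B → k[t,t⁻¹]`. It carries `t − λ` to
`T − λ`, which evaluation at the unit `λ` sends to `0`; hence `t − λ` is not a unit. That `t` is
a unit is inherited from `k[t,t⁻¹]`. -/

namespace LaurentPolynomial

theorem not_isUnit_T_sub_C {R : Type*} [CommRing R] [Nontrivial R] (u : Rˣ) :
    ¬IsUnit (T 1 - C (u : R) : R[T;T⁻¹]) := by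
  intro h
  simpa [eval₂_T, eval₂_C] using h.map (eval₂ (RingHom.id R) u)

end LaurentPolynomial

section

omit [CharZero k]

namespace B

def augmentation : B k →ₐ[LaurentPolynomial k] LaurentPolynomial k :=
  RingQuot.liftAlgHom _ ⟨FreeAlgebra.lift _ 0, by rintro _ _ ⟨⟩ <;> simp⟩

theorem augmentation_Bt : augmentation k (Bt k) = T 1 :=
  (augmentation k).commutes _

theorem augmentation_algebraMap (c : k) : augmentation k (algebraMap k (B k) c) = C c :=
  ((augmentation k).restrictScalars k).commutes c

end B

theorem isUnit_Bt : IsUnit (Bt k) :=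
  (isUnit_T 1).map _

theorem not_isUnit_Bt_sub_algebraMap (u : kˣ) : ¬IsUnit (Bt k - algebraMap k (B k) u) := by
  intro h
  have := h.map (B.augmentation k)
  rw [map_sub (B.augmentation k), B.augmentation_Bt, B.augmentation_algebraMap] at this
  exact LaurentPolynomial.not_isUnit_T_sub_C u this

end

/-- for every nonzero `λ ∈ k`, the element `t − λ` is a nonunit in `B`
(equivalently `B/(t−λ)B` is nontrivial), while `t` itself is a unit in `B`
(so `B/tB` is the zero ring). -/
theorem t_sub_lam_not_unit_and_t_unit :
    (∀ lam : k, lam ≠ 0 → ¬ IsUnit (Bt k - algebraMap k (B k) lam)) ∧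
    IsUnit (Bt k) :=
  ⟨fun lam hlam => not_isUnit_Bt_sub_algebraMap k (Units.mk0 lam hlam), isUnit_Bt k⟩
end
end
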